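/- arXiv:1204.1647 — 3 statements merged into one kernel-verified Lean document; each statement's English description precedes it below -/
import Mathlib

section
/- Let α, μ ∈ ℝ, Δt > 0, θ, σ ∈ [0,1], and suppose 1 − θαΔt + (σ/2)μ²Δt > 0. Set p = (1 + (1−θ)αΔt − ((1−σ)/2)μ²Δt)/(1 − θαΔt + (σ/2)μ²Δt), q = μ√Δt/(1 − θαΔt + (σ/2)μ²Δt), r = (μ²Δt/2)/(1 − θαΔt + (σ/2)μ²Δt). Then (p+r)² + q² + 2r² < 1 if and only if (2α + μ²) + Δt α²(1 − 2θ) + (Δt μ²/2)(2σα + μ²) < 0. -/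
theorem stmt_10 (α μ Δt θ σ : ℝ) (hΔt : 0 < Δt)
    (hθ : θ ∈ Set.Icc (0 : ℝ) 1) (hσ : σ ∈ Set.Icc (0 : ℝ) 1)
    (hden : 0 < 1 - θ * α * Δt + σ / 2 * μ ^ 2 * Δt)
    (p q r : ℝ)
    (hp : p = (1 + (1 - θ) * α * Δt - (1 - σ) / 2 * μ ^ 2 * Δt)
              / (1 - θ * α * Δt + σ / 2 * μ ^ 2 * Δt))
    (hq : q = μ * Real.sqrt Δt / (1 - θ * α * Δt + σ / 2 * μ ^ 2 * Δt))
    (hr : r = μ ^ 2 * Δt / 2 / (1 - θ * α * Δt + σ / 2 * μ ^ 2 * Δt)) :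
    (p + r) ^ 2 + q ^ 2 + 2 * r ^ 2 < 1 ↔
      (2 * α + μ ^ 2) + Δt * α ^ 2 * (1 - 2 * θ)
        + Δt * μ ^ 2 / 2 * (2 * σ * α + μ ^ 2) < 0 := by
  have hD := hden.ne'
  have hs : Real.sqrt Δt ^ 2 = Δt := Real.sq_sqrt hΔt.le
  have key : (p + r) ^ 2 + q ^ 2 + 2 * r ^ 2 - 1 =
      Δt * ((2 * α + μ ^ 2) + Δt * α ^ 2 * (1 - 2 * θ)
        + Δt * μ ^ 2 / 2 * (2 * σ * α + μ ^ 2))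
        / (1 - θ * α * Δt + σ / 2 * μ ^ 2 * Δt) ^ 2 := by
    have hq2 : q ^ 2 = μ ^ 2 * Δt / (1 - θ * α * Δt + σ / 2 * μ ^ 2 * Δt) ^ 2 := by
      rw [hq, div_pow, mul_pow, hs]
    rw [hp, hr, hq2]
    set d := 1 - θ * α * Δt + σ / 2 * μ ^ 2 * Δt with hd
    field_simp
    rw [hd]
    ring
  have hD2 : 0 < (1 - θ * α * Δt + σ / 2 * μ ^ 2 * Δt) ^ 2 := by positivity
  constructor
  · intro h
    have h' : (p + r) ^ 2 + q ^ 2 + 2 * r ^ 2 - 1 < 0 := by linarith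
    rw [key, div_neg_iff] at h'
    rcases h' with ⟨hn, _⟩ | ⟨hn, _⟩
    · nlinarith
    · nlinarith
  · intro h
    have h' : Δt * ((2 * α + μ ^ 2) + Δt * α ^ 2 * (1 - 2 * θ)
        + Δt * μ ^ 2 / 2 * (2 * σ * α + μ ^ 2))
        / (1 - θ * α * Δt + σ / 2 * μ ^ 2 * Δt) ^ 2 < 0 := by
      apply div_neg_of_neg_of_pos _ hD2
      nlinarith
    rw [← key] at h'
    linarith
end

section
/- For θ = 1/2 and σ = 1, the scheme stability condition (2α + μ²) + Δtα²(1 − 2θ) + (Δtμ²/2)(2σα + μ²) < 0 reduces, for every Δt > 0, to a condition equivalent to 2α + μ² < 0. More precisely, for θ = 1/2 and σ = 1 the left-hand side equals (2α + μ²)(1 + (Δtμ²)/2) when simplified, hence (since 1 + Δtμ²/2 > 0) the scheme is mean-square stable for every step size Δt > 0 if and only if the SDE is mean-square stable (2α + μ² < 0). -/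
theorem stmt_11 (α μ : ℝ) :
    (∀ Δt : ℝ, 0 < Δt →
      (2 * α + μ ^ 2) + Δt * α ^ 2 * (1 - 2 * (1 / 2 : ℝ))
        + Δt * μ ^ 2 / 2 * (2 * 1 * α + μ ^ 2)
      = (2 * α + μ ^ 2) * (1 + Δt * μ ^ 2 / 2)) ∧
    ((∀ Δt : ℝ, 0 < Δt →
      (2 * α + μ ^ 2) + Δt * α ^ 2 * (1 - 2 * (1 / 2 : ℝ))
        + Δt * μ ^ 2 / 2 * (2 * 1 * α + μ ^ 2) < 0) ↔ 2 * α + μ ^ 2 < 0) := by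
  constructor
  · intro Δt _; ring
  · constructor
    · intro h
      have h1 := h 1 one_pos
      have e : (2 * α + μ ^ 2) + 1 * α ^ 2 * (1 - 2 * (1 / 2 : ℝ))
          + 1 * μ ^ 2 / 2 * (2 * 1 * α + μ ^ 2) = (2 * α + μ ^ 2) * (1 + 1 * μ ^ 2 / 2) := by ring
      rw [e] at h1
      have hpos : (0:ℝ) < 1 + 1 * μ ^ 2 / 2 := by positivity
      nlinarith
    · intro h Δt hΔt
      have e : (2 * α + μ ^ 2) + Δt * α ^ 2 * (1 - 2 * (1 / 2 : ℝ))
          + Δt * μ ^ 2 / 2 * (2 * 1 * α + μ ^ 2) = (2 * α + μ ^ 2) * (1 + Δt * μ ^ 2 / 2) := by ring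
      rw [e]
      have hpos : (0:ℝ) < 1 + Δt * μ ^ 2 / 2 := by positivity
      exact mul_neg_of_neg_of_pos h hpos
end

section
/- Let θ ≥ 1/2, σ = 1, and suppose 2α + μ² < 0 for reals α, μ. Then for every Δt > 0, (2α + μ²) + Δtα²(1 − 2θ) + (Δtμ²/2)(2α + μ²) < 0. (A-stability of the (θ,1)-Milstein scheme for θ ≥ 1/2.) -/
theorem stmt_12 (α μ θ : ℝ) (hθ : 1 / 2 ≤ θ) (hstab : 2 * α + μ ^ 2 < 0) :
    ∀ Δt : ℝ, 0 < Δt →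
      (2 * α + μ ^ 2) + Δt * α ^ 2 * (1 - 2 * θ)
        + Δt * μ ^ 2 / 2 * (2 * α + μ ^ 2) < 0 := by
  intro Δt hΔt
  have h1 : Δt * α ^ 2 * (1 - 2 * θ) ≤ 0 :=
    mul_nonpos_of_nonneg_of_nonpos (by positivity) (by linarith)
  have h2 : Δt * μ ^ 2 / 2 * (2 * α + μ ^ 2) ≤ 0 :=
    mul_nonpos_of_nonneg_of_nonpos (by positivity) (by linarith)
  linarith
end
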